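/- arXiv:1609.04775 — 4 statements merged into one kernel-verified Lean document; each statement's English description precedes it below -/
import Mathlib

section
/- For α ∈ (0,1) and f ∈ C¹[a,b], the left ψ-Caputo fractional derivative is bounded: ‖^C D_{a+}^{α,ψ} f‖_∞ ≤ ((ψ(b)−ψ(a))^{1−α}/Γ(2−α)) · (‖f‖_∞ + ‖f'/ψ'‖_∞). -/
open Real MeasureTheory Set

/-- Left ψ-fractional integral of order α. -/
noncomputable def psiInt (a α : ℝ) (ψ f : ℝ → ℝ) (x : ℝ) : ℝ :=
  (1 / Real.Gamma α) * ∫ t in a..x, deriv ψ t * (ψ x - ψ t) ^ (α - 1) * f t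

/-- Left ψ-Caputo fractional derivative of order α ∈ (0,1). -/
noncomputable def caputo (a α : ℝ) (ψ f : ℝ → ℝ) (x : ℝ) : ℝ :=
  (1 / Real.Gamma (1 - α)) * ∫ t in a..x, (ψ x - ψ t) ^ (-α) * deriv f t

private lemma le_biSup_real {g : ℝ → ℝ} {s : Set ℝ} {C : ℝ} (hC : ∀ y ∈ s, g y ≤ C) {t : ℝ}
    (ht : t ∈ s) : g t ≤ ⨆ y ∈ s, g y := by
  have hb : BddAbove (Set.range fun y => ⨆ _ : y ∈ s, g y) := by
    refine ⟨max C 0, ?_⟩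
    rintro _ ⟨y, rfl⟩
    by_cases hy : y ∈ s
    · show (⨆ _ : y ∈ s, g y) ≤ _
      rw [ciSup_pos (f := fun _ => g y) hy]; exact le_max_of_le_left (hC y hy)
    · show (⨆ _ : y ∈ s, g y) ≤ _
      haveI : IsEmpty (y ∈ s) := ⟨hy⟩
      rw [Real.iSup_of_isEmpty]; exact le_max_right _ _
  calc g t = ⨆ _ : t ∈ s, g t := (ciSup_pos (f := fun _ => g t) ht).symm
    _ ≤ ⨆ y ∈ s, g y := le_ciSup hb t

theorem stmt2 (a b : ℝ) (hab : a < b) (ψ : ℝ → ℝ)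
    (hψ : ContDiffOn ℝ 1 ψ (Icc a b)) (hmono : StrictMonoOn ψ (Icc a b))
    (hψ' : ∀ x ∈ Icc a b, deriv ψ x ≠ 0)
    (f : ℝ → ℝ) (hf : ContDiffOn ℝ 1 f (Icc a b))
    (α : ℝ) (hα : α ∈ Ioo (0:ℝ) 1) (x : ℝ) (hx : x ∈ Icc a b) :
    |caputo a α ψ f x| ≤
      (ψ b - ψ a) ^ (1 - α) / Real.Gamma (2 - α) *
        ((⨆ y ∈ Icc a b, |f y|) + ⨆ y ∈ Icc a b, |deriv f y / deriv ψ y|) := by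
  obtain ⟨hα0, hα1⟩ := hα
  obtain ⟨hax, hxb⟩ := hx
  have h1α : (0:ℝ) < 1 - α := by linarith
  have ha : a ∈ Icc a b := ⟨le_rfl, hab.le⟩
  have hb' : b ∈ Icc a b := ⟨hab.le, le_rfl⟩
  have hxI : x ∈ Icc a b := ⟨hax, hxb⟩
  -- ψ facts
  have hψcont : ContinuousOn ψ (Icc a b) := hψ.continuousOn
  have hψdiff : ∀ t ∈ Icc a b, DifferentiableAt ℝ ψ t := by
    intro t ht
    by_contra h
    exact hψ' t ht (deriv_zero_of_not_differentiableAt h)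
  have hψ'cont : ContinuousOn (deriv ψ) (Icc a b) := by
    refine (hψ.continuousOn_derivWithin (uniqueDiffOn_Icc hab) le_rfl).congr fun t ht => ?_
    exact (((hψdiff t ht).hasDerivAt.hasDerivWithinAt).derivWithin
      (uniqueDiffOn_Icc hab t ht)).symm
  have hψ'pos : ∀ t ∈ Icc a b, 0 < deriv ψ t := by
    obtain ⟨c, hc, hc'⟩ := exists_hasDerivAt_eq_slope ψ (deriv ψ) hab hψcont
      (fun y hy => (hψdiff y (Ioo_subset_Icc_self hy)).hasDerivAt)
    have hcpos : 0 < deriv ψ c := by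
      rw [hc']
      exact div_pos (sub_pos.2 (hmono ha hb' hab)) (sub_pos.2 hab)
    intro t ht
    rcases lt_trichotomy (deriv ψ t) 0 with h | h | h
    · exfalso
      have hsub : uIcc t c ⊆ Icc a b :=
        (ordConnected_Icc).uIcc_subset ht (Ioo_subset_Icc_self hc)
      obtain ⟨u, hu, hu0⟩ := intermediate_value_uIcc (hψ'cont.mono hsub)
        (mem_uIcc.2 (Or.inl ⟨h.le, hcpos.le⟩))
      exact hψ' u (hsub hu) hu0
    · exact absurd h (hψ' t ht)
    · exact h
  -- minimum of ψ' on Icc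
  obtain ⟨c₀, hc₀, hmin⟩ := isCompact_Icc.exists_isMinOn (nonempty_Icc.2 hab.le) hψ'cont
  set m : ℝ := deriv ψ c₀ with hm
  have hmpos : 0 < m := hψ'pos c₀ hc₀
  have hkey : ∀ t ∈ Icc a b, ∀ s ∈ Icc a b, t ≤ s → m * (s - t) ≤ ψ s - ψ t :=
    (convex_Icc a b).mul_sub_le_image_sub_of_le_deriv hψcont
      (fun y hy => (hψdiff y (interior_subset hy)).differentiableWithinAt)
      (fun y hy => hmin (interior_subset hy))
  -- bound on ψ'
  obtain ⟨Mψ, hMψ⟩ := isCompact_Icc.exists_bound_of_continuousOn hψ'cont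
  -- f facts
  have hfd : ∀ t ∈ Ioo a b, ContDiffAt ℝ 1 f t := fun t ht =>
    hf.contDiffAt (Icc_mem_nhds ht.1 ht.2)
  have hf'eq : ∀ t ∈ Ioo a b, derivWithin f (Icc a b) t = deriv f t := fun t ht =>
    derivWithin_of_mem_nhds (Icc_mem_nhds ht.1 ht.2)
  obtain ⟨K, hK⟩ := isCompact_Icc.exists_bound_of_continuousOn
    (hf.continuousOn_derivWithin (uniqueDiffOn_Icc hab) le_rfl)
  -- sup bounds
  set g : ℝ → ℝ := fun y => |deriv f y / deriv ψ y| with hg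
  set C : ℝ := max (K / m) (max (g a) (g b)) with hC
  have hgC : ∀ y ∈ Icc a b, g y ≤ C := by
    intro y hy
    rcases eq_or_lt_of_le hy.1 with rfl | hay
    · exact le_max_of_le_right (le_max_left _ _)
    rcases eq_or_lt_of_le hy.2 with rfl | hyb
    · exact le_max_of_le_right (le_max_right _ _)
    have hyo : y ∈ Ioo a b := ⟨hay, hyb⟩
    have h1 : |deriv f y| ≤ K := by
      rw [← hf'eq y hyo]; exact hK y hy
    have h2 := hψ'pos y hy
    refine le_max_of_le_left ?_
    show |deriv f y / deriv ψ y| ≤ K / m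
    rw [abs_div, abs_of_pos h2]
    exact div_le_div₀ ((abs_nonneg _).trans h1) h1 hmpos (hmin hy)
  set M2 : ℝ := ⨆ y ∈ Icc a b, |deriv f y / deriv ψ y| with hM2def
  have hM2 : ∀ t ∈ Icc a b, |deriv f t / deriv ψ t| ≤ M2 := fun t ht => le_biSup_real hgC ht
  have hM2nn : 0 ≤ M2 := le_trans (abs_nonneg _) (hM2 a ha)
  set M1 : ℝ → ℝ := fun y => |f y| with hM1f
  obtain ⟨Kf, hKf⟩ := isCompact_Icc.exists_bound_of_continuousOn hf.continuousOn
  have hM1nn : 0 ≤ ⨆ y ∈ Icc a b, |f y| :=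
    le_trans (abs_nonneg (f a)) (le_biSup_real (g := fun y => |f y|) hKf ha)
  -- Gamma facts
  have hΓ1 : 0 < Real.Gamma (1 - α) := Real.Gamma_pos_of_pos h1α
  have hΓ2 : Real.Gamma (2 - α) = (1 - α) * Real.Gamma (1 - α) := by
    have := Real.Gamma_add_one (s := 1 - α) h1α.ne'
    rw [show (1:ℝ) - α + 1 = 2 - α by ring] at this
    exact this
  have hΓ2pos : 0 < Real.Gamma (2 - α) := Real.Gamma_pos_of_pos (by linarith)
  have hBnn : 0 ≤ ψ b - ψ a := sub_nonneg.2 (hmono.monotoneOn ha hb' hab.le)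
  have hRHSfac : 0 ≤ (ψ b - ψ a) ^ (1 - α) / Real.Gamma (2 - α) :=
    div_nonneg (Real.rpow_nonneg hBnn _) hΓ2pos.le
  -- trivial case x = a
  rcases eq_or_lt_of_le hax with rfl | hax'
  · rw [caputo, intervalIntegral.integral_same, mul_zero, abs_zero]
    exact mul_nonneg hRHSfac (by positivity)
  -- main case a < x
  have hψax : 0 ≤ ψ x - ψ a := sub_nonneg.2 (hmono.monotoneOn ha hxI hax)
  have hψpos : ∀ t ∈ Ico a x, 0 < ψ x - ψ t := by
    intro t ht
    have htI : t ∈ Icc a b := ⟨ht.1, ht.2.le.trans hxb⟩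
    exact sub_pos.2 (hmono htI hxI ht.2)
  set G : ℝ → ℝ := fun t => (ψ x - ψ t) ^ (-α) * deriv ψ t with hGdef
  set F : ℝ → ℝ := fun t => -(ψ x - ψ t) ^ (1 - α) / (1 - α) with hFdef
  have hIccsub : Icc a x ⊆ Icc a b := Icc_subset_Icc le_rfl hxb
  have hIoosub : Ioo a x ⊆ Ioo a b := Ioo_subset_Ioo le_rfl hxb
  -- derivative of F
  have hFderiv : ∀ t ∈ Ioo a x, HasDerivAt F (G t) t := by
    intro t ht
    have htI : t ∈ Icc a b := hIccsub (Ioo_subset_Icc_self ht)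
    have hbpos : 0 < ψ x - ψ t := hψpos t ⟨ht.1.le, ht.2⟩
    have hbase : HasDerivAt (fun t => ψ x - ψ t) (-deriv ψ t) t := by
      have h0 := (hasDerivAt_const t (ψ x)).sub (hψdiff t htI).hasDerivAt
      rw [zero_sub] at h0
      exact h0
    have h1 : HasDerivAt (fun u : ℝ => u ^ (1 - α))
        ((1 - α) * (ψ x - ψ t) ^ (1 - α - 1)) (ψ x - ψ t) :=
      Real.hasDerivAt_rpow_const (Or.inl hbpos.ne')
    have h2 := (h1.comp t hbase).neg.div_const (1 - α)
    refine h2.congr_deriv ?_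
    have : (1:ℝ) - α - 1 = -α := by ring
    rw [this]
    field_simp
    ring
  -- integrability of G
  have hGcont : ContinuousOn G (Ioo a x) := by
    have hψc : ContinuousOn ψ (Ioo a x) := hψcont.mono (hIoosub.trans Ioo_subset_Icc_self)
    refine ContinuousOn.mul ?_ (hψ'cont.mono (hIoosub.trans Ioo_subset_Icc_self))
    exact ((continuousOn_const.sub hψc).rpow_const fun t ht =>
      Or.inl (hψpos t ⟨ht.1.le, ht.2⟩).ne')
  have hGmeas : AEStronglyMeasurable G (volume.restrict (uIoc a x)) := by
    rw [uIoc_of_le hax, ← Measure.restrict_congr_set Ioo_ae_eq_Ioc]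
    exact hGcont.aestronglyMeasurable measurableSet_Ioo
  have hGbound : ∀ t ∈ Ioc a x, ‖G t‖ ≤ (m ^ (-α) * Mψ) * (x - t) ^ (-α) := by
    intro t ht
    rcases eq_or_lt_of_le ht.2 with rfl | htx
    · simp [hGdef, Real.zero_rpow (neg_ne_zero.2 hα0.ne'),
        mul_nonneg (mul_nonneg (Real.rpow_nonneg hmpos.le _)
          ((abs_nonneg (deriv ψ t)).trans (hMψ t (hIccsub ⟨ht.1.le, le_rfl⟩)))) ]
    have htI : t ∈ Icc a b := hIccsub ⟨ht.1.le, ht.2⟩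
    have h3 : m * (x - t) ≤ ψ x - ψ t := hkey t htI x hxI ht.2
    have h4 : 0 < m * (x - t) := mul_pos hmpos (sub_pos.2 htx)
    have h5 : (ψ x - ψ t) ^ (-α) ≤ (m * (x - t)) ^ (-α) :=
      Real.rpow_le_rpow_of_nonpos h4 h3 (neg_nonpos.2 hα0.le)
    have h6 : (m * (x - t)) ^ (-α) = m ^ (-α) * (x - t) ^ (-α) :=
      Real.mul_rpow hmpos.le (sub_pos.2 htx).le
    have hGt : ‖G t‖ = (ψ x - ψ t) ^ (-α) * deriv ψ t := by
      rw [hGdef, Real.norm_eq_abs, abs_mul, abs_of_nonneg (Real.rpow_nonneg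
        (hψpos t ⟨ht.1.le, htx⟩).le _), abs_of_pos (hψ'pos t htI)]
    rw [hGt]
    calc (ψ x - ψ t) ^ (-α) * deriv ψ t
        ≤ (m ^ (-α) * (x - t) ^ (-α)) * Mψ := by
          refine mul_le_mul (h6 ▸ h5) ((le_abs_self _).trans (hMψ t htI))
            (hψ'pos t htI).le
            (mul_nonneg (Real.rpow_nonneg hmpos.le _) (Real.rpow_nonneg (sub_nonneg.2 ht.2) _))
      _ = (m ^ (-α) * Mψ) * (x - t) ^ (-α) := by ring
  have hHint : IntervalIntegrable (fun t => (m ^ (-α) * Mψ) * (x - t) ^ (-α)) volume a x := by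
    have h0 : IntervalIntegrable (fun s : ℝ => s ^ (-α)) volume 0 (x - a) :=
      intervalIntegral.intervalIntegrable_rpow' (by linarith)
    have h1 := (h0.comp_sub_left x).const_mul (m ^ (-α) * Mψ)
    simpa using h1.symm
  have hGint : IntervalIntegrable G volume a x := by
    refine hHint.mono_fun' hGmeas ?_
    rw [Filter.EventuallyLE, ae_restrict_iff' measurableSet_uIoc]
    refine Filter.Eventually.of_forall fun t ht => ?_
    rw [uIoc_of_le hax] at ht
    exact hGbound t ht
  -- FTC
  have hFcont : ContinuousOn F (Icc a x) := by
    have hψc : ContinuousOn ψ (Icc a x) := hψcont.mono hIccsub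
    exact (((continuousOn_const.sub hψc).rpow_const fun t _ =>
      Or.inr h1α.le).neg).div_const _
  have hFTC : ∫ t in a..x, G t = F x - F a :=
    intervalIntegral.integral_eq_sub_of_hasDerivAt_of_le hax hFcont hFderiv hGint
  have hval : ∫ t in a..x, G t = (ψ x - ψ a) ^ (1 - α) / (1 - α) := by
    rw [hFTC, hFdef]
    simp only [sub_self, Real.zero_rpow h1α.ne']
    field_simp
    ring
  -- bound the caputo integral
  have hbound2 : ∀ᵐ t ∂volume.restrict (uIoc a x),
      ‖(ψ x - ψ t) ^ (-α) * deriv f t‖ ≤ M2 * G t := by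
    rw [ae_restrict_iff' measurableSet_uIoc]
    refine Filter.Eventually.of_forall fun t ht => ?_
    rw [uIoc_of_le hax] at ht
    rcases eq_or_lt_of_le ht.2 with rfl | htx
    · simp [hGdef, Real.zero_rpow (neg_ne_zero.2 hα0.ne')]
    have htI : t ∈ Icc a b := hIccsub ⟨ht.1.le, htx.le⟩
    have hψ't := hψ'pos t htI
    have h7 : |deriv f t| ≤ M2 * deriv ψ t := by
      have := hM2 t htI
      calc |deriv f t| = |deriv f t / deriv ψ t| * deriv ψ t := by
            rw [abs_div, abs_of_pos hψ't, div_mul_cancel₀ _ hψ't.ne']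
        _ ≤ M2 * deriv ψ t := mul_le_mul_of_nonneg_right this hψ't.le
    rw [Real.norm_eq_abs, abs_mul, abs_of_nonneg (Real.rpow_nonneg
      (hψpos t ⟨ht.1.le, htx⟩).le _)]
    calc (ψ x - ψ t) ^ (-α) * |deriv f t|
        ≤ (ψ x - ψ t) ^ (-α) * (M2 * deriv ψ t) :=
          mul_le_mul_of_nonneg_left h7 (Real.rpow_nonneg (hψpos t ⟨ht.1.le, htx⟩).le _)
      _ = M2 * G t := by rw [hGdef]; ring
  have hmain : |∫ t in a..x, (ψ x - ψ t) ^ (-α) * deriv f t| ≤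
      M2 * ((ψ x - ψ a) ^ (1 - α) / (1 - α)) := by
    have := intervalIntegral.norm_integral_le_abs_of_norm_le hbound2 (hGint.const_mul M2)
    rw [Real.norm_eq_abs] at this
    refine this.trans ?_
    rw [intervalIntegral.integral_const_mul, hval, abs_mul, abs_of_nonneg hM2nn,
      abs_of_nonneg (div_nonneg (Real.rpow_nonneg hψax _) h1α.le)]
  -- assemble
  rw [caputo, abs_mul, abs_of_nonneg (by positivity : (0:ℝ) ≤ 1 / Real.Gamma (1 - α))]
  have hstep : 1 / Real.Gamma (1 - α) * (M2 * ((ψ x - ψ a) ^ (1 - α) / (1 - α))) =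
      (ψ x - ψ a) ^ (1 - α) / Real.Gamma (2 - α) * M2 := by
    rw [hΓ2]; field_simp
  calc 1 / Real.Gamma (1 - α) * |∫ t in a..x, (ψ x - ψ t) ^ (-α) * deriv f t|
      ≤ 1 / Real.Gamma (1 - α) * (M2 * ((ψ x - ψ a) ^ (1 - α) / (1 - α))) :=
        mul_le_mul_of_nonneg_left hmain (by positivity)
    _ = (ψ x - ψ a) ^ (1 - α) / Real.Gamma (2 - α) * M2 := hstep
    _ ≤ (ψ b - ψ a) ^ (1 - α) / Real.Gamma (2 - α) *
        ((⨆ y ∈ Icc a b, |f y|) + M2) := by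
        have h8 : (ψ x - ψ a) ^ (1 - α) ≤ (ψ b - ψ a) ^ (1 - α) :=
          Real.rpow_le_rpow hψax (sub_le_sub_right (hmono.monotoneOn hxI hb' hxb) _) h1α.le
        exact mul_le_mul ((div_le_div_iff_of_pos_right hΓ2pos).2 h8) (by linarith) hM2nn hRHSfac
end

section
/- For f ∈ C¹[a,b] and α ∈ (0,1), the composition of the ψ-fractional integral with the ψ-Caputo derivative recovers f up to its initial value: I_{a+}^{α,ψ} (^C D_{a+}^{α,ψ} f)(x) = f(x) − f(a) for all x ∈ [a,b]. -/
open Real MeasureTheory Set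

lemma betaReal01 {α : ℝ} (h0 : 0 < α) (h1 : α < 1) :
    ∫ v in (0:ℝ)..1, v ^ (-α) * (1-v) ^ (α-1) = Real.Gamma (1-α) * Real.Gamma α := by
  have h1' : (0:ℝ) < 1 - α := by linarith
  have key := Complex.Gamma_mul_Gamma_eq_betaIntegral
      (s := ((1-α : ℝ) : ℂ)) (t := ((α : ℝ) : ℂ)) (by simpa using h1') (by simpa using h0)
  have hsum : ((1-α : ℝ) : ℂ) + ((α : ℝ) : ℂ) = 1 := by push_cast; ring
  rw [hsum, Complex.Gamma_one, one_mul] at key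
  have hi : Complex.betaIntegral ((1-α : ℝ) : ℂ) ((α : ℝ) : ℂ)
      = ((∫ v in (0:ℝ)..1, v ^ (-α) * (1-v) ^ (α-1) : ℝ) : ℂ) := by
    rw [Complex.betaIntegral, ← intervalIntegral.integral_ofReal]
    apply intervalIntegral.integral_congr
    intro v hv
    rw [uIcc_of_le (by norm_num : (0:ℝ) ≤ 1), mem_Icc] at hv
    show (v:ℂ) ^ (((1-α : ℝ):ℂ) - 1) * ((1:ℂ) - v) ^ (((α:ℝ):ℂ) - 1)
        = ((v ^ (-α) * (1 - v) ^ (α - 1) : ℝ) : ℂ)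
    have e1 : (((1-α : ℝ):ℂ) - 1) = ((-α : ℝ) : ℂ) := by push_cast; ring
    have e2 : (((α : ℝ):ℂ) - 1) = ((α - 1 : ℝ) : ℂ) := by push_cast; ring
    have e3 : ((1:ℂ) - v) = ((1 - v : ℝ) : ℂ) := by push_cast; ring
    rw [e1, e2, e3, ← Complex.ofReal_cpow hv.1, ← Complex.ofReal_cpow (by linarith [hv.2]),
      ← Complex.ofReal_mul]
  rw [hi, Complex.Gamma_ofReal, Complex.Gamma_ofReal, ← Complex.ofReal_mul] at key
  exact (Complex.ofReal_injective key).symm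

lemma beta_Ioo {α : ℝ} (h0 : 0 < α) (h1 : α < 1) {c d : ℝ} (hcd : c < d) :
    ∫ u in Ioo c d, (d-u) ^ (α-1) * (u-c) ^ (-α) = Real.Gamma (1-α) * Real.Gamma α := by
  have hk : (0:ℝ) < d - c := by linarith
  have h₁ : (∫ u in Ioo c d, (d-u) ^ (α-1) * (u-c) ^ (-α))
      = ∫ u in c..d, (d-u) ^ (α-1) * (u-c) ^ (-α) := by
    rw [intervalIntegral.integral_of_le hcd.le, MeasureTheory.integral_Ioc_eq_integral_Ioo]
  have h₂ := intervalIntegral.mul_integral_comp_mul_add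
    (a := (0:ℝ)) (b := 1) (f := fun u => (d-u) ^ (α-1) * (u-c) ^ (-α)) (c := d - c) (d := c)
  simp only [mul_zero, zero_add, mul_one] at h₂
  have hb : d - c + c = d := by ring
  rw [hb] at h₂
  have h₃ : (∫ v in (0:ℝ)..1, (d - ((d-c) * v + c)) ^ (α-1) * ((d-c) * v + c - c) ^ (-α))
      = ∫ v in (0:ℝ)..1, (d-c)⁻¹ * (v ^ (-α) * (1-v) ^ (α-1)) := by
    apply intervalIntegral.integral_congr
    intro v hv
    rw [uIcc_of_le (by norm_num : (0:ℝ) ≤ 1), mem_Icc] at hv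
    have e1 : d - ((d-c) * v + c) = (d-c) * (1-v) := by ring
    have e2 : (d-c) * v + c - c = (d-c) * v := by ring
    simp only []
    rw [e1, e2, Real.mul_rpow hk.le (by linarith [hv.2]), Real.mul_rpow hk.le hv.1]
    have e3 : (d-c) ^ (α-1) * (d-c) ^ (-α) = (d-c)⁻¹ := by
      rw [← Real.rpow_add hk]
      have : α - 1 + -α = -1 := by ring
      rw [this, Real.rpow_neg_one]
    calc (d-c) ^ (α-1) * (1-v) ^ (α-1) * ((d-c) ^ (-α) * v ^ (-α))
        = ((d-c) ^ (α-1) * (d-c) ^ (-α)) * (v ^ (-α) * (1-v) ^ (α-1)) := by ring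
      _ = (d-c)⁻¹ * (v ^ (-α) * (1-v) ^ (α-1)) := by rw [e3]
  rw [h₁, ← h₂, h₃, intervalIntegral.integral_const_mul, betaReal01 h0 h1]
  field_simp


lemma rpow_int_Ioo {α : ℝ} (hα : 0 < α) (c d : ℝ) :
    IntegrableOn (fun s => (d - s) ^ (α - 1)) (Ioo c d) := by
  have h : IntervalIntegrable (fun s => (d - s) ^ (α - 1)) volume c d := by
    have h0 : IntervalIntegrable (fun u : ℝ => u ^ (α - 1)) volume (d - d) (d - c) := by
      apply intervalIntegral.intervalIntegrable_rpow' (by linarith)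
    simpa using (h0.comp_sub_left d).symm
  rcases le_or_gt c d with hcd | hcd
  · exact (intervalIntegrable_iff_integrableOn_Ioo_of_le hcd).mp h
  · simp [Ioo_eq_empty (by linarith : ¬ c < d), integrableOn_empty]

lemma rpow_int_Ioo' {α : ℝ} (hα : α < 1) (c d : ℝ) :
    IntegrableOn (fun s => (d - s) ^ (-α)) (Ioo c d) := by
  have := rpow_int_Ioo (α := 1 - α) (by linarith) c d
  simpa using this

lemma triangle_swap {a x : ℝ} (G : ℝ → ℝ → ℝ)
    (hint : Integrable (fun p : ℝ × ℝ => if p.2 < p.1 then G p.1 p.2 else 0)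
        ((volume.restrict (Ioo a x)).prod (volume.restrict (Ioo a x)))) :
    ∫ t in Ioo a x, ∫ s in Ioo a t, G t s = ∫ s in Ioo a x, ∫ t in Ioo s x, G t s := by
  have swap := MeasureTheory.integral_integral_swap
    (f := fun t s => if s < t then G t s else 0) hint
  have h1 : ∀ t ∈ Ioo a x,
      (∫ s in Ioo a x, if s < t then G t s else 0) = ∫ s in Ioo a t, G t s := by
    intro t ht
    have : (fun s => if s < t then G t s else 0) = (Iio t).indicator (fun s => G t s) := by
      ext s; simp [Set.indicator, mem_Iio]
    rw [this, setIntegral_indicator measurableSet_Iio]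
    have hset : Ioo a x ∩ Iio t = Ioo a t := by
      ext s; simp only [mem_inter_iff, mem_Ioo, mem_Iio]
      constructor
      · rintro ⟨⟨u1, u2⟩, u3⟩; exact ⟨u1, u3⟩
      · rintro ⟨u1, u3⟩; exact ⟨⟨u1, u3.trans ht.2⟩, u3⟩
    rw [hset]
  have h2 : ∀ s ∈ Ioo a x,
      (∫ t in Ioo a x, if s < t then G t s else 0) = ∫ t in Ioo s x, G t s := by
    intro s hs
    have : (fun t => if s < t then G t s else 0) = (Ioi s).indicator (fun t => G t s) := by
      ext t; simp [Set.indicator, mem_Ioi]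
    rw [this, setIntegral_indicator measurableSet_Ioi]
    have hset : Ioo a x ∩ Ioi s = Ioo s x := by
      ext t; simp only [mem_inter_iff, mem_Ioo, mem_Ioi]
      constructor
      · rintro ⟨⟨u1, u2⟩, u3⟩; exact ⟨u3, u2⟩
      · rintro ⟨u1, u3⟩; exact ⟨⟨hs.1.trans u1, u3⟩, u1⟩
    rw [hset]
  calc ∫ t in Ioo a x, ∫ s in Ioo a t, G t s
      = ∫ t in Ioo a x, ∫ s in Ioo a x, if s < t then G t s else 0 :=
        (setIntegral_congr_fun measurableSet_Ioo (fun t ht => (h1 t ht).symm))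
    _ = ∫ s in Ioo a x, ∫ t in Ioo a x, if s < t then G t s else 0 := swap
    _ = ∫ s in Ioo a x, ∫ t in Ioo s x, G t s :=
        setIntegral_congr_fun measurableSet_Ioo (fun s hs => h2 s hs)

theorem stmt8 (a b : ℝ) (hab : a < b) (ψ : ℝ → ℝ)
    (hψ : ContDiffOn ℝ 1 ψ (Icc a b)) (hmono : StrictMonoOn ψ (Icc a b))
    (hψ' : ∀ x ∈ Icc a b, deriv ψ x ≠ 0)
    (f : ℝ → ℝ) (hf : ContDiffOn ℝ 1 f (Icc a b))
    (α : ℝ) (hα : α ∈ Ioo (0:ℝ) 1) (x : ℝ) (hx : x ∈ Icc a b) :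
    psiInt a α ψ (caputo a α ψ f) x = f x - f a := by
  obtain ⟨h0α, h1α⟩ := hα
  obtain ⟨hax, hxb⟩ := hx
  rcases eq_or_lt_of_le hax with rfl | hax
  · simp [psiInt, caputo]
  have hab' : a ≤ b := hab.le
  have huD : UniqueDiffOn ℝ (Icc a b) := uniqueDiffOn_Icc hab
  set Ψ : ℝ → ℝ := IccExtend hab' (fun t : Icc a b => ψ t) with hΨdef
  set φ : ℝ → ℝ := IccExtend hab' (fun t : Icc a b => derivWithin ψ (Icc a b) t) with hφdef
  set g : ℝ → ℝ := IccExtend hab' (fun t : Icc a b => derivWithin f (Icc a b) t) with hgdef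
  have hΨeq : ∀ t ∈ Icc a b, Ψ t = ψ t := fun t ht => IccExtend_of_mem hab' _ ht
  have hΨc : Continuous Ψ :=
    Continuous.Icc_extend' (continuousOn_iff_continuous_restrict.mp hψ.continuousOn)
  have hφc : Continuous φ := Continuous.Icc_extend' (continuousOn_iff_continuous_restrict.mp
    (hψ.continuousOn_derivWithin huD le_rfl))
  have hgc : Continuous g := Continuous.Icc_extend' (continuousOn_iff_continuous_restrict.mp
    (hf.continuousOn_derivWithin huD le_rfl))
  -- differentiability of ψ everywhere on Icc
  have hdiffψ : ∀ t ∈ Icc a b, HasDerivAt ψ (deriv ψ t) t := by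
    intro t ht
    by_cases hd : DifferentiableAt ℝ ψ t
    · exact hd.hasDerivAt
    · exact absurd (deriv_zero_of_not_differentiableAt hd) (hψ' t ht)
  have hφeq : ∀ t ∈ Icc a b, φ t = deriv ψ t := by
    intro t ht
    rw [hφdef, IccExtend_of_mem hab' _ ht]
    exact ((hdiffψ t ht).differentiableAt).derivWithin (huD t ht)
  have hgeq : ∀ s ∈ Ioo a b, g s = deriv f s := by
    intro s hs
    rw [hgdef, IccExtend_of_mem hab' _ (Ioo_subset_Icc_self hs)]
    exact derivWithin_of_mem_nhds (Icc_mem_nhds hs.1 hs.2)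
  -- positivity of φ on Icc
  have hφeqIcc : EqOn φ (deriv ψ) (Icc a b) := fun t ht => hφeq t ht
  have hφpos : ∀ t ∈ Icc a b, 0 < φ t := by
    obtain ⟨c₀, hc₀, hc₀eq⟩ := exists_hasDerivAt_eq_slope ψ (deriv ψ) hab hψ.continuousOn
      (fun u hu => hdiffψ u (Ioo_subset_Icc_self hu))
    have hc₀pos : 0 < φ c₀ := by
      rw [hφeq c₀ (Ioo_subset_Icc_self hc₀), hc₀eq]
      exact div_pos (sub_pos.mpr (hmono (left_mem_Icc.mpr hab') (right_mem_Icc.mpr hab') hab))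
        (sub_pos.mpr hab)
    intro t ht
    rcases lt_trichotomy (φ t) 0 with hneg | hz | hpos
    · exfalso
      have hsub : uIcc t c₀ ⊆ Icc a b := uIcc_subset_Icc ht (Ioo_subset_Icc_self hc₀)
      have : (0:ℝ) ∈ uIcc (φ t) (φ c₀) := by
        rw [mem_uIcc]; left; exact ⟨hneg.le, hc₀pos.le⟩
      obtain ⟨z, hz, hzeq⟩ := intermediate_value_uIcc (hφc.continuousOn (s := uIcc t c₀)) this
      exact hψ' z (hsub hz) (by rw [← hφeq z (hsub hz)]; exact hzeq)
    · exact absurd ((hφeq t ht).symm.trans hz) (hψ' t ht)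
    · exact hpos
  -- min of φ
  obtain ⟨t₀, ht₀, hmin⟩ := isCompact_Icc.exists_isMinOn (nonempty_Icc.mpr hab') hφc.continuousOn
  set m : ℝ := φ t₀ with hmdef
  have hm : 0 < m := hφpos t₀ ht₀
  have hmle : ∀ t ∈ Icc a b, m ≤ φ t := fun t ht => hmin ht
  -- MVT bound
  have hMVT : ∀ s t, a ≤ s → s ≤ t → t ≤ b → m * (t - s) ≤ ψ t - ψ s := by
    intro s t has hst htb
    rcases eq_or_lt_of_le hst with rfl | hst
    · simp
    obtain ⟨c, hc, hceq⟩ := exists_hasDerivAt_eq_slope ψ (deriv ψ) hst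
      (hψ.continuousOn.mono (Icc_subset_Icc has htb))
      (fun u hu => hdiffψ u ⟨by linarith [hu.1], by linarith [hu.2]⟩)
    have hcmem : c ∈ Icc a b := ⟨by linarith [hc.1], by linarith [hc.2]⟩
    have : m ≤ (ψ t - ψ s) / (t - s) := by
      rw [← hceq, ← hφeq c hcmem]; exact hmle c hcmem
    calc m * (t - s) ≤ ((ψ t - ψ s) / (t - s)) * (t - s) := by
          apply mul_le_mul_of_nonneg_right this (by linarith)
      _ = ψ t - ψ s := div_mul_cancel₀ _ (by linarith)
  -- bound for g and φ
  obtain ⟨Mg, hMg⟩ := (isCompact_Icc (a := a) (b := b)).exists_bound_of_continuousOn hgc.continuousOn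
  obtain ⟨Mφ, hMφ⟩ := (isCompact_Icc (a := a) (b := b)).exists_bound_of_continuousOn hφc.continuousOn
  have hMg0 : 0 ≤ Mg := le_trans (norm_nonneg _) (hMg a (left_mem_Icc.mpr hab'))
  have hMφ0 : 0 ≤ Mφ := le_trans (norm_nonneg _) (hMφ a (left_mem_Icc.mpr hab'))
  have hxIcc : x ∈ Icc a b := ⟨hax.le, hxb⟩
  have hΓα : 0 < Real.Gamma α := Real.Gamma_pos_of_pos h0α
  have hΓα' : 0 < Real.Gamma (1 - α) := Real.Gamma_pos_of_pos (by linarith)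
  set G : ℝ → ℝ → ℝ := fun t s => φ t * (Ψ x - Ψ t) ^ (α-1) * ((Ψ t - Ψ s) ^ (-α) * g s)
    with hGdef
  -- Step 1 : rewrite LHS with nice functions
  have hstep1 : psiInt a α ψ (caputo a α ψ f) x
      = (1/Real.Gamma α) * ((1/Real.Gamma (1-α)) *
        ∫ t in Ioo a x, φ t * (Ψ x - Ψ t) ^ (α-1) *
          (∫ s in Ioo a t, (Ψ t - Ψ s) ^ (-α) * g s)) := by
    rw [psiInt, intervalIntegral.integral_of_le hax.le, MeasureTheory.integral_Ioc_eq_integral_Ioo]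
    have hcongr : ∀ t ∈ Ioo a x,
        deriv ψ t * (ψ x - ψ t) ^ (α-1) * caputo a α ψ f t
        = (1/Real.Gamma (1-α)) * (φ t * (Ψ x - Ψ t) ^ (α-1) *
            (∫ s in Ioo a t, (Ψ t - Ψ s) ^ (-α) * g s)) := by
      intro t ht
      have htIcc : t ∈ Icc a b := ⟨ht.1.le, ht.2.le.trans hxb⟩
      have hinner : (∫ s in a..t, (ψ t - ψ s) ^ (-α) * deriv f s)
          = ∫ s in Ioo a t, (Ψ t - Ψ s) ^ (-α) * g s := by
        rw [intervalIntegral.integral_of_le ht.1.le, MeasureTheory.integral_Ioc_eq_integral_Ioo]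
        refine setIntegral_congr_fun measurableSet_Ioo (fun s hs => ?_)
        have hsIoo : s ∈ Ioo a b := ⟨hs.1, lt_of_lt_of_le (hs.2.trans ht.2) hxb⟩
        rw [hgeq s hsIoo, hΨeq t htIcc, hΨeq s (Ioo_subset_Icc_self hsIoo)]
      rw [caputo, hinner, ← hφeq t htIcc, hΨeq t htIcc, hΨeq x hxIcc]
      ring
    rw [setIntegral_congr_fun measurableSet_Ioo hcongr, MeasureTheory.integral_const_mul]
  -- integrability on the triangle
  have hint : Integrable (fun p : ℝ × ℝ => if p.2 < p.1 then G p.1 p.2 else 0)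
      ((volume.restrict (Ioo a x)).prod (volume.restrict (Ioo a x))) := by
    have hGm : Measurable (fun p : ℝ × ℝ => G p.1 p.2) := by
      apply Measurable.mul
      · apply Measurable.mul
        · exact hφc.measurable.comp measurable_fst
        · exact (measurable_const.sub (hΨc.measurable.comp measurable_fst)).pow measurable_const
      · exact (((hΨc.measurable.comp measurable_fst).sub
            (hΨc.measurable.comp measurable_snd)).pow measurable_const).mul
            (hgc.measurable.comp measurable_snd)
    have hHm : Measurable (fun p : ℝ × ℝ => if p.2 < p.1 then G p.1 p.2 else 0) :=
      Measurable.ite (measurableSet_lt measurable_snd measurable_fst) hGm measurable_const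
    -- norm bound for G on the triangle
    have hGbd : ∀ t ∈ Icc a b, ∀ s ∈ Ioo a t,
        ‖G t s‖ ≤ (|φ t * (Ψ x - Ψ t) ^ (α-1)| * (m ^ (-α) * Mg)) * (t - s) ^ (-α) := by
      intro t htIcc s hs
      have hsIcc : s ∈ Icc a b := ⟨hs.1.le, hs.2.le.trans htIcc.2⟩
      have hts : 0 < t - s := sub_pos.mpr hs.2
      have hmts : 0 < m * (t - s) := mul_pos hm hts
      have hlow : m * (t - s) ≤ Ψ t - Ψ s := by
        rw [hΨeq t htIcc, hΨeq s hsIcc]; exact hMVT s t hs.1.le hs.2.le htIcc.2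
      have hbound1 : (Ψ t - Ψ s) ^ (-α) ≤ m ^ (-α) * (t - s) ^ (-α) := by
        rw [← Real.mul_rpow hm.le hts.le]
        exact Real.rpow_le_rpow_of_nonpos hmts hlow (neg_nonpos.mpr h0α.le)
      have hg1 : |g s| ≤ Mg := by rw [← Real.norm_eq_abs]; exact hMg s hsIcc
      have hrpos : (0:ℝ) ≤ (Ψ t - Ψ s) ^ (-α) := Real.rpow_nonneg (by linarith) _
      calc ‖G t s‖ = |φ t * (Ψ x - Ψ t) ^ (α-1)| * ((Ψ t - Ψ s) ^ (-α) * |g s|) := by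
            rw [hGdef]; simp only [Real.norm_eq_abs, abs_mul]; rw [abs_of_nonneg hrpos]
        _ ≤ |φ t * (Ψ x - Ψ t) ^ (α-1)| * ((m ^ (-α) * (t - s) ^ (-α)) * Mg) := by
            refine mul_le_mul_of_nonneg_left ?_ (abs_nonneg _)
            exact mul_le_mul hbound1 hg1 (abs_nonneg _)
              (mul_nonneg (Real.rpow_nonneg hm.le _) (Real.rpow_nonneg hts.le _))
        _ = (|φ t * (Ψ x - Ψ t) ^ (α-1)| * (m ^ (-α) * Mg)) * (t - s) ^ (-α) := by ring
    -- section integrability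
    have hsec : ∀ t ∈ Ioo a x, IntegrableOn (fun s => G t s) (Ioo a t) volume := by
      intro t ht
      have htIcc : t ∈ Icc a b := ⟨ht.1.le, ht.2.le.trans hxb⟩
      have hdom : IntegrableOn
          (fun s => (|φ t * (Ψ x - Ψ t) ^ (α-1)| * (m ^ (-α) * Mg)) * (t - s) ^ (-α))
          (Ioo a t) volume := (rpow_int_Ioo' h1α a t).const_mul _
      refine hdom.mono' ((hGm.comp measurable_prodMk_left).aestronglyMeasurable) ?_
      filter_upwards [ae_restrict_mem measurableSet_Ioo] with s hs
      exact hGbd t htIcc s hs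
    rw [MeasureTheory.integrable_prod_iff hHm.aestronglyMeasurable]
    constructor
    · filter_upwards [ae_restrict_mem measurableSet_Ioo] with t ht
      have heq : (fun s => if s < t then G t s else 0)
          = (Iio t).indicator (fun s => G t s) := by
        ext s; by_cases h : s < t <;> simp [Set.indicator, mem_Iio, h]
      show Integrable (fun s => if s < t then G t s else 0) (volume.restrict (Ioo a x))
      rw [heq, integrable_indicator_iff measurableSet_Iio, IntegrableOn,
        Measure.restrict_restrict measurableSet_Iio]
      have hseteq : Iio t ∩ Ioo a x = Ioo a t := by
        ext s; simp only [mem_inter_iff, mem_Iio, mem_Ioo]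
        constructor
        · rintro ⟨u1, u2, u3⟩; exact ⟨u2, u1⟩
        · rintro ⟨u1, u2⟩; exact ⟨u2, u1, u2.trans ht.2⟩
      rw [hseteq]
      exact hsec t ht
    · set K : ℝ := (b - a) ^ (1-α) / (1-α) with hKdef
      have hK0 : 0 ≤ K := div_nonneg (Real.rpow_nonneg (by linarith) _) (by linarith)
      have hdom : Integrable
          (fun t => (Mφ * m ^ (α-1) * (m ^ (-α) * Mg) * K) * (x - t) ^ (α-1))
          (volume.restrict (Ioo a x)) := (rpow_int_Ioo h0α a x).const_mul _
      refine hdom.mono' (hHm.aestronglyMeasurable.norm.integral_prod_right') ?_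
      filter_upwards [ae_restrict_mem measurableSet_Ioo] with t ht
      have htIcc : t ∈ Icc a b := ⟨ht.1.le, ht.2.le.trans hxb⟩
      have hxt : 0 < x - t := sub_pos.mpr ht.2
      have hΨxt : m * (x - t) ≤ Ψ x - Ψ t := by
        rw [hΨeq x hxIcc, hΨeq t htIcc]; exact hMVT t x ht.1.le ht.2.le hxb
      have hΨxtpos : 0 < Ψ x - Ψ t := lt_of_lt_of_le (mul_pos hm hxt) hΨxt
      have hseteq : Ioo a x ∩ Iio t = Ioo a t := by
        ext s; simp only [mem_inter_iff, mem_Iio, mem_Ioo]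
        constructor
        · rintro ⟨⟨u1, u2⟩, u3⟩; exact ⟨u1, u3⟩
        · rintro ⟨u1, u2⟩; exact ⟨⟨u1, u2.trans ht.2⟩, u2⟩
      have heq : (fun s => ‖if s < t then G t s else 0‖)
          = (Iio t).indicator (fun s => ‖G t s‖) := by
        ext s; by_cases h : s < t <;> simp [Set.indicator, mem_Iio, h]
      have e1 : (∫ s, ‖if s < t then G t s else 0‖ ∂(volume.restrict (Ioo a x)))
          = ∫ s in Ioo a t, ‖G t s‖ := by
        rw [heq, MeasureTheory.setIntegral_indicator measurableSet_Iio, hseteq]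
      have habs : ‖∫ s, ‖if s < t then G t s else 0‖ ∂(volume.restrict (Ioo a x))‖
          = ∫ s, ‖if s < t then G t s else 0‖ ∂(volume.restrict (Ioo a x)) := by
        rw [Real.norm_eq_abs, abs_of_nonneg (integral_nonneg (fun s => norm_nonneg _))]
      show ‖∫ s, ‖if s < t then G t s else 0‖ ∂(volume.restrict (Ioo a x))‖
          ≤ (Mφ * m ^ (α-1) * (m ^ (-α) * Mg) * K) * (x - t) ^ (α-1)
      rw [habs, e1]
      have hφtb : |φ t * (Ψ x - Ψ t) ^ (α-1)| ≤ Mφ * (Ψ x - Ψ t) ^ (α-1) := by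
        rw [abs_mul, abs_of_nonneg (Real.rpow_nonneg hΨxtpos.le _)]
        refine mul_le_mul_of_nonneg_right ?_ (Real.rpow_nonneg hΨxtpos.le _)
        rw [← Real.norm_eq_abs]; exact hMφ t htIcc
      have hb1 : (∫ s in Ioo a t, ‖G t s‖)
          ≤ ∫ s in Ioo a t, (Mφ * (Ψ x - Ψ t) ^ (α-1) * (m ^ (-α) * Mg)) * (t - s) ^ (-α) := by
        refine setIntegral_mono_on ((hsec t ht).norm)
          ((rpow_int_Ioo' h1α a t).const_mul _) measurableSet_Ioo ?_
        intro s hs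
        refine le_trans (hGbd t htIcc s hs) ?_
        refine mul_le_mul_of_nonneg_right ?_ (Real.rpow_nonneg (sub_pos.mpr hs.2).le _)
        exact mul_le_mul_of_nonneg_right hφtb
          (mul_nonneg (Real.rpow_nonneg hm.le _) hMg0)
      have hb2 : (∫ s in Ioo a t, (t - s) ^ (-α)) ≤ K := by
        have hc : (∫ s in Ioo a t, (t - s) ^ (-α)) = (t-a) ^ (1-α) / (1-α) := by
          rw [← MeasureTheory.integral_Ioc_eq_integral_Ioo,
            ← intervalIntegral.integral_of_le ht.1.le,
            intervalIntegral.integral_comp_sub_left (fun u => u ^ (-α)) t, sub_self,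
            integral_rpow (Or.inl (by linarith : (-1:ℝ) < -α))]
          rw [Real.zero_rpow (show (0:ℝ) < -α+1 by linarith).ne']
          have he : -α + 1 = 1 - α := by ring
          rw [he]; ring
        rw [hc, hKdef]
        exact (div_le_div_iff_of_pos_right (by linarith)).mpr
          (Real.rpow_le_rpow (by linarith [htIcc.1]) (by linarith [htIcc.2]) (by linarith))
      have hb3 : (Ψ x - Ψ t) ^ (α-1) ≤ m ^ (α-1) * (x - t) ^ (α-1) := by
        rw [← Real.mul_rpow hm.le hxt.le]
        exact Real.rpow_le_rpow_of_nonpos (mul_pos hm hxt) hΨxt (by linarith)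
      have hintpos : (0:ℝ) ≤ ∫ s in Ioo a t, (t - s) ^ (-α) :=
        setIntegral_nonneg measurableSet_Ioo
          (fun s hs => Real.rpow_nonneg (sub_pos.mpr hs.2).le _)
      calc (∫ s in Ioo a t, ‖G t s‖)
          ≤ ∫ s in Ioo a t, (Mφ * (Ψ x - Ψ t) ^ (α-1) * (m ^ (-α) * Mg)) * (t - s) ^ (-α) := hb1
        _ = (Mφ * (Ψ x - Ψ t) ^ (α-1) * (m ^ (-α) * Mg)) * ∫ s in Ioo a t, (t - s) ^ (-α) :=
            MeasureTheory.integral_const_mul _ _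
        _ ≤ (Mφ * (Ψ x - Ψ t) ^ (α-1) * (m ^ (-α) * Mg)) * K := by
            refine mul_le_mul_of_nonneg_left hb2 ?_
            exact mul_nonneg (mul_nonneg hMφ0 (Real.rpow_nonneg hΨxtpos.le _))
              (mul_nonneg (Real.rpow_nonneg hm.le _) hMg0)
        _ ≤ (Mφ * (m ^ (α-1) * (x - t) ^ (α-1)) * (m ^ (-α) * Mg)) * K := by
            refine mul_le_mul_of_nonneg_right ?_ hK0
            refine mul_le_mul_of_nonneg_right ?_
              (mul_nonneg (Real.rpow_nonneg hm.le _) hMg0)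
            exact mul_le_mul_of_nonneg_left hb3 hMφ0
        _ = (Mφ * m ^ (α-1) * (m ^ (-α) * Mg) * K) * (x - t) ^ (α-1) := by ring
  -- Step 5 : inner integral evaluation
  have hstep5 : ∀ s ∈ Ioo a x, (∫ t in Ioo s x, G t s)
      = (Real.Gamma (1-α) * Real.Gamma α) * g s := by
    intro s hs
    have hsIcc : s ∈ Icc a b := ⟨hs.1.le, hs.2.le.trans hxb⟩
    have hsub : Ioo s x ⊆ Icc a b := fun u hu => ⟨hs.1.le.trans hu.1.le, hu.2.le.trans hxb⟩
    have hψsx : ψ s < ψ x := hmono hsIcc hxIcc hs.2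
    have key := integral_image_eq_integral_abs_deriv_smul (measurableSet_Ioo (a := s) (b := x))
      (fun t ht => (hdiffψ t (hsub ht)).hasDerivWithinAt)
      (hmono.injOn.mono hsub)
      (fun u => (ψ x - u) ^ (α-1) * (u - ψ s) ^ (-α))
    have himg : ψ '' Ioo s x = Ioo (ψ s) (ψ x) := by
      apply Subset.antisymm
      · rintro _ ⟨t, ht, rfl⟩
        exact ⟨hmono hsIcc (hsub ht) ht.1, hmono (hsub ht) hxIcc ht.2⟩
      · exact intermediate_value_Ioo hs.2.le (hψ.continuousOn.mono (Icc_subset_Icc hs.1.le hxb))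
    rw [himg, beta_Ioo h0α h1α hψsx] at key
    have hcongr : ∀ t ∈ Ioo s x, G t s
        = (|deriv ψ t| • ((ψ x - ψ t) ^ (α-1) * (ψ t - ψ s) ^ (-α))) * g s := by
      intro t ht
      have htIcc : t ∈ Icc a b := hsub ht
      rw [hGdef]
      simp only [smul_eq_mul]
      rw [abs_of_pos (by rw [← hφeq t htIcc]; exact hφpos t htIcc), ← hφeq t htIcc,
        hΨeq t htIcc, hΨeq x hxIcc, hΨeq s hsIcc]
      ring
    rw [setIntegral_congr_fun measurableSet_Ioo hcongr, MeasureTheory.integral_mul_const, ← key]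
  -- Step 6 : FTC
  have hFTC : (∫ s in Ioo a x, g s) = f x - f a := by
    rw [← MeasureTheory.integral_Ioc_eq_integral_Ioo, ← intervalIntegral.integral_of_le hax.le]
    refine intervalIntegral.integral_eq_sub_of_hasDeriv_right_of_le hax.le
      (hf.continuousOn.mono (Icc_subset_Icc le_rfl hxb)) (fun t ht => ?_)
      (hgc.intervalIntegrable a x)
    have htb : t < b := lt_of_lt_of_le ht.2 hxb
    have hdf : DifferentiableAt ℝ f t :=
      ((hf.differentiableOn one_ne_zero) t ⟨ht.1.le, htb.le⟩).differentiableAt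
        (Icc_mem_nhds ht.1 htb)
    rw [hgeq t ⟨ht.1, htb⟩]
    exact hdf.hasDerivAt.hasDerivWithinAt
  rw [hstep1]
  have hpull : (∫ t in Ioo a x, φ t * (Ψ x - Ψ t) ^ (α-1) *
        (∫ s in Ioo a t, (Ψ t - Ψ s) ^ (-α) * g s))
      = ∫ t in Ioo a x, ∫ s in Ioo a t, G t s := by
    refine setIntegral_congr_fun measurableSet_Ioo (fun t _ => ?_)
    rw [← MeasureTheory.integral_const_mul]
  rw [hpull, triangle_swap G hint,
    setIntegral_congr_fun measurableSet_Ioo hstep5, MeasureTheory.integral_const_mul, hFTC]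
  field_simp
end

section
/- Product rule with the kernel function: for α ∈ (0,1) and f ∈ C¹[a,b], ^C D_{a+}^{α,ψ} (ψ(x) f(x)) = ψ(x) ^C D_{a+}^{α,ψ} f(x) + I_{a+}^{1−α,ψ} f(x) − (1−α) I_{a+}^{2−α,ψ}(f'/ψ')(x). -/
open Real MeasureTheory Set

theorem stmt14 (a b : ℝ) (hab : a < b) (ψ : ℝ → ℝ)
    (hψ : ContDiffOn ℝ 1 ψ (Icc a b)) (hmono : StrictMonoOn ψ (Icc a b))
    (hψ' : ∀ x ∈ Icc a b, deriv ψ x ≠ 0)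
    (f : ℝ → ℝ) (hf : ContDiffOn ℝ 1 f (Icc a b))
    (α : ℝ) (hα : α ∈ Ioo (0:ℝ) 1) (x : ℝ) (hx : x ∈ Icc a b) :
    caputo a α ψ (fun t => ψ t * f t) x =
      ψ x * caputo a α ψ f x + psiInt a (1 - α) ψ f x -
        (1 - α) * psiInt a (2 - α) ψ (fun t => deriv f t / deriv ψ t) x := by
  obtain ⟨ha, hxb⟩ := hx
  obtain ⟨hα0, hα1⟩ := hα
  have h1α : (0:ℝ) < 1 - α := by linarith
  rcases eq_or_lt_of_le ha with rfl | hax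
  · simp [caputo, psiInt]
  -- basic facts about ψ
  have hdiff : ∀ t ∈ Icc a b, DifferentiableAt ℝ ψ t := by
    intro t ht
    by_contra h
    exact hψ' t ht (deriv_zero_of_not_differentiableAt h)
  have hderiv_eq : ∀ t ∈ Icc a b, derivWithin ψ (Icc a b) t = deriv ψ t := by
    intro t ht
    exact (hdiff t ht).derivWithin (uniqueDiffOn_Icc hab t ht)
  have hcontp : ContinuousOn (deriv ψ) (Icc a b) :=
    (hψ.continuousOn_derivWithin (uniqueDiffOn_Icc hab) le_rfl).congr
      (fun t ht => (hderiv_eq t ht).symm)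
  -- positivity of deriv ψ on Icc a b
  have hpos : ∀ t ∈ Icc a b, 0 < deriv ψ t := by
    intro t ht
    by_contra h
    push_neg at h
    have hneg : deriv ψ t < 0 := lt_of_le_of_ne h (hψ' t ht)
    obtain ⟨ξ, hξ, hξs⟩ := exists_deriv_eq_slope ψ hab (hψ.continuousOn)
      (fun s hs => (((hψ.differentiableOn one_ne_zero) s (Ioo_subset_Icc_self hs)).differentiableAt
        (Icc_mem_nhds hs.1 hs.2)).differentiableWithinAt)
    have hξpos : 0 < deriv ψ ξ := by
      rw [hξs]
      have := hmono (left_mem_Icc.2 hab.le) (right_mem_Icc.2 hab.le) hab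
      exact div_pos (sub_pos.2 this) (sub_pos.2 hab)
    have hsub : uIcc t ξ ⊆ Icc a b := uIcc_subset_Icc ht (Ioo_subset_Icc_self hξ)
    have h0 : (0:ℝ) ∈ uIcc (deriv ψ t) (deriv ψ ξ) := by
      rw [mem_uIcc]
      left; exact ⟨hneg.le, hξpos.le⟩
    obtain ⟨s, hs, hs0⟩ := intermediate_value_uIcc (hcontp.mono hsub) h0
    exact hψ' s (hsub hs) hs0
  -- lower bound m for deriv ψ
  obtain ⟨t0, ht0, hmin⟩ := isCompact_Icc.exists_isMinOn (nonempty_Icc.2 hab.le) hcontp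
  set m : ℝ := deriv ψ t0 with hm
  have hm0 : 0 < m := hpos t0 ht0
  -- ψ x - ψ t ≥ m (x - t)
  have hlow : ∀ t ∈ Icc a x, m * (x - t) ≤ ψ x - ψ t := by
    have hmono2 : MonotoneOn (fun s => ψ s - m * s) (Icc a b) := by
      have keyd : ∀ s ∈ Ioo a b, HasDerivAt (fun s => ψ s - m * s) (deriv ψ s - m) s := by
        intro s hs
        have h := ((hdiff s (Ioo_subset_Icc_self hs)).hasDerivAt.sub
          ((hasDerivAt_id s).const_mul m))
        rw [mul_one] at h; exact h
      apply monotoneOn_of_deriv_nonneg (f := fun s => ψ s - m * s) (convex_Icc a b)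
        (hψ.continuousOn.sub ((continuous_const.mul continuous_id).continuousOn))
      · intro s hs
        rw [interior_Icc] at hs
        exact (keyd s hs).differentiableAt.differentiableWithinAt
      · intro s hs
        rw [interior_Icc] at hs
        rw [(keyd s hs).deriv, sub_nonneg]
        exact hmin (Ioo_subset_Icc_self hs)
    intro t ht
    have h1 : ψ t - m * t ≤ ψ x - m * x :=
      hmono2 ⟨ht.1, le_trans ht.2 hxb⟩ ⟨ha, hxb⟩ ht.2
    nlinarith
  have hbase : ∀ t ∈ Ico a x, 0 < ψ x - ψ t := by
    intro t ht
    have := hmono ⟨ht.1, le_trans ht.2.le hxb⟩ ⟨ha, hxb⟩ ht.2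
    linarith
  -- integrability of the kernel
  have hK : IntervalIntegrable (fun t => (ψ x - ψ t) ^ (-α)) volume a x := by
    rw [intervalIntegrable_iff_integrableOn_Ioc_of_le hax.le,
      integrableOn_Ioc_iff_integrableOn_Ioo]
    have hdom : IntegrableOn (fun t => m ^ (-α) * (x - t) ^ (-α)) (Ioo a x) volume := by
      have h1 : IntervalIntegrable (fun u : ℝ => u ^ (-α)) volume 0 (x - a) :=
        intervalIntegral.intervalIntegrable_rpow' (by linarith)
      have h2 := ((h1.comp_sub_left x).symm.const_mul (m ^ (-α)))
      simp only [sub_zero, sub_sub_cancel] at h2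
      rw [intervalIntegrable_iff_integrableOn_Ioc_of_le hax.le,
        integrableOn_Ioc_iff_integrableOn_Ioo] at h2
      exact h2
    refine MeasureTheory.Integrable.mono hdom ?_ ?_
    · -- measurability
      have hcc : ContinuousOn (fun t => (ψ x - ψ t) ^ (-α)) (Ioo a x) := by
        apply ContinuousOn.rpow_const
        · exact continuousOn_const.sub (hψ.continuousOn.mono
            (fun s hs => ⟨hs.1.le, le_trans hs.2.le hxb⟩))
        · intro s hs
          exact Or.inl (ne_of_gt (hbase s ⟨hs.1.le, hs.2⟩))
      exact hcc.aestronglyMeasurable measurableSet_Ioo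
    · -- bound
      refine Filter.eventually_of_mem (self_mem_ae_restrict measurableSet_Ioo) ?_
      intro t ht
      have hb0 : 0 < ψ x - ψ t := hbase t ⟨ht.1.le, ht.2⟩
      have hmx : 0 < m * (x - t) := by
        have : 0 < x - t := by linarith [ht.2]
        positivity
      rw [Real.norm_of_nonneg (Real.rpow_nonneg hb0.le _),
        Real.norm_of_nonneg (mul_nonneg (Real.rpow_nonneg hm0.le _)
          (Real.rpow_nonneg (by linarith [ht.2] : (0:ℝ) ≤ x - t) _))]
      calc (ψ x - ψ t) ^ (-α) ≤ (m * (x - t)) ^ (-α) :=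
            Real.rpow_le_rpow_of_nonpos hmx (hlow t ⟨ht.1.le, ht.2.le⟩) (by linarith)
        _ = m ^ (-α) * (x - t) ^ (-α) := Real.mul_rpow hm0.le (by linarith [ht.2])
  -- derivative of f
  set g := derivWithin f (Icc a b) with hgdef
  have hcontg : ContinuousOn g (Icc a b) :=
    hf.continuousOn_derivWithin (uniqueDiffOn_Icc hab) le_rfl
  have hgf : ∀ t ∈ Ioo a b, deriv f t = g t := fun t ht =>
    (derivWithin_of_mem_nhds (Icc_mem_nhds ht.1 ht.2)).symm
  have hdf : ∀ t ∈ Ioo a b, DifferentiableAt ℝ f t := fun t ht =>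
    ((hf.differentiableOn one_ne_zero) t (Ioo_subset_Icc_self ht)).differentiableAt
      (Icc_mem_nhds ht.1 ht.2)
  have hIccsub : Icc a x ⊆ Icc a b := Icc_subset_Icc le_rfl hxb
  have hIoosub : Ioo a x ⊆ Ioo a b := Ioo_subset_Ioo le_rfl hxb
  have huIcc : uIcc a x = Icc a x := uIcc_of_le hax.le
  -- integrable pieces
  have hQ : IntervalIntegrable (fun t => (ψ x - ψ t) ^ (-α) * g t) volume a x := by
    apply hK.mul_continuousOn
    rw [huIcc]; exact hcontg.mono hIccsub
  have hP : IntervalIntegrable (fun t => (ψ x - ψ t) ^ (-α) * (deriv ψ t * f t)) volume a x := by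
    apply hK.mul_continuousOn
    rw [huIcc]
    exact (hcontp.mono hIccsub).mul (hf.continuousOn.mono hIccsub)
  have hcontR : ContinuousOn (fun t => (ψ x - ψ t) ^ (1 - α) * g t) (uIcc a x) := by
    rw [huIcc]
    refine ContinuousOn.mul ?_ (hcontg.mono hIccsub)
    exact ContinuousOn.rpow_const
      (continuousOn_const.sub (hψ.continuousOn.mono hIccsub)) (fun t ht => Or.inr h1α.le)
  have hR : IntervalIntegrable (fun t => (ψ x - ψ t) ^ (1 - α) * g t) volume a x :=
    hcontR.intervalIntegrable
  -- a.e. facts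
  have haex : ∀ᵐ t : ℝ ∂volume, t ≠ x := by
    simpa using Measure.ae_ne volume x
  have hmem : ∀ᵐ t : ℝ ∂volume, t ∈ Set.uIoc a x → t ∈ Ioo a x := by
    filter_upwards [haex] with t ht h
    rw [uIoc_of_le hax.le] at h
    exact ⟨h.1, lt_of_le_of_ne h.2 ht⟩
  -- rewrite the four integrals
  have eq1 : (∫ t in a..x, (ψ x - ψ t) ^ (-α) * deriv (fun s => ψ s * f s) t)
      = ∫ t in a..x, ((ψ x - ψ t) ^ (-α) * (deriv ψ t * f t)
          + (ψ x * ((ψ x - ψ t) ^ (-α) * g t) - (ψ x - ψ t) ^ (1 - α) * g t)) := by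
    apply intervalIntegral.integral_congr_ae
    filter_upwards [hmem] with t hmem' ht
    have htI := hmem' ht
    have htb : t ∈ Ioo a b := hIoosub htI
    have hdm : deriv (fun s => ψ s * f s) t = deriv ψ t * f t + ψ t * g t := by
      rw [deriv_fun_mul (hdiff t (Ioo_subset_Icc_self htb)) (hdf t htb), hgf t htb]
    have hb0 : 0 < ψ x - ψ t := hbase t ⟨htI.1.le, htI.2⟩
    have hr : (ψ x - ψ t) ^ (1 - α) = (ψ x - ψ t) * (ψ x - ψ t) ^ (-α) := by
      rw [show (1:ℝ) - α = 1 + -α by ring, Real.rpow_add hb0, Real.rpow_one]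
    rw [hdm, hr]; ring
  have eq2 : (∫ t in a..x, (ψ x - ψ t) ^ (-α) * deriv f t)
      = ∫ t in a..x, (ψ x - ψ t) ^ (-α) * g t := by
    apply intervalIntegral.integral_congr_ae
    filter_upwards [hmem] with t hmem' ht
    rw [hgf t (hIoosub (hmem' ht))]
  have eq3 : (∫ t in a..x, deriv ψ t * (ψ x - ψ t) ^ (1 - α - 1) * f t)
      = ∫ t in a..x, (ψ x - ψ t) ^ (-α) * (deriv ψ t * f t) := by
    apply intervalIntegral.integral_congr
    intro t ht
    rw [show (1:ℝ) - α - 1 = -α by ring]; ring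
  have eq4 : (∫ t in a..x, deriv ψ t * (ψ x - ψ t) ^ (2 - α - 1) * (deriv f t / deriv ψ t))
      = ∫ t in a..x, (ψ x - ψ t) ^ (1 - α) * g t := by
    apply intervalIntegral.integral_congr_ae
    filter_upwards [hmem] with t hmem' ht
    have htI := hmem' ht
    have htb : t ∈ Ioo a b := hIoosub htI
    have hd : deriv ψ t ≠ 0 := hψ' t (Ioo_subset_Icc_self htb)
    rw [show (2:ℝ) - α - 1 = 1 - α by ring, hgf t htb]
    field_simp
  -- Gamma identity
  have hΓpos : 0 < Real.Gamma (1 - α) := Real.Gamma_pos_of_pos h1α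
  have hΓ : Real.Gamma (2 - α) = (1 - α) * Real.Gamma (1 - α) := by
    rw [show (2:ℝ) - α = (1 - α) + 1 by ring, Real.Gamma_add_one (ne_of_gt h1α)]
  -- assemble
  simp only [caputo, psiInt]
  rw [eq1, eq2, eq3, eq4, hΓ,
    intervalIntegral.integral_add hP ((hQ.const_mul (ψ x)).sub hR),
    intervalIntegral.integral_sub (hQ.const_mul (ψ x)) hR,
    intervalIntegral.integral_const_mul]
  field_simp
  ring
end

section
/- Fractional Fermat theorem: let α ∈ (0,1), f ∈ C¹[a,b], and suppose f attains a maximum at x* ∈ (a,b). Then ^C D_{a+}^{α,ψ} f(x*) ≥ 0. -/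
open Real MeasureTheory Set
open Filter

theorem stmt15 (a b : ℝ) (hab : a < b) (ψ : ℝ → ℝ)
    (hψ : ContDiffOn ℝ 1 ψ (Icc a b)) (hmono : StrictMonoOn ψ (Icc a b))
    (hψ' : ∀ x ∈ Icc a b, deriv ψ x ≠ 0)
    (f : ℝ → ℝ) (hf : ContDiffOn ℝ 1 f (Icc a b))
    (α : ℝ) (hα : α ∈ Ioo (0:ℝ) 1)
    (xs : ℝ) (hxs : xs ∈ Ioo a b) (hmax : ∀ x ∈ Icc a b, f x ≤ f xs) :
    0 ≤ caputo a α ψ f xs := by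
  obtain ⟨hα0, hα1⟩ := hα
  obtain ⟨hax, hxb⟩ := hxs
  have hxsI : xs ∈ Icc a b := ⟨hax.le, hxb.le⟩
  have haI : a ∈ Icc a b := ⟨le_rfl, hab.le⟩
  have hbI : b ∈ Icc a b := ⟨hab.le, le_rfl⟩
  have hud : UniqueDiffOn ℝ (Icc a b) := uniqueDiffOn_Icc hab
  -- ψ is differentiable at every point of [a,b]
  have hψdiff : ∀ x ∈ Icc a b, DifferentiableAt ℝ ψ x := by
    intro x hx
    by_contra h
    exact hψ' x hx (deriv_zero_of_not_differentiableAt h)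
  have hψdW : ∀ x ∈ Icc a b, derivWithin ψ (Icc a b) x = deriv ψ x := fun x hx =>
    (hψdiff x hx).derivWithin (hud x hx)
  have hcψ' : ContinuousOn (deriv ψ) (Icc a b) :=
    (hψ.continuousOn_derivWithin hud le_rfl).congr fun x hx => (hψdW x hx).symm
  -- deriv ψ is positive on [a,b]
  have hψ'pos : ∀ x ∈ Icc a b, 0 < deriv ψ x := by
    obtain ⟨c, hc, hc'⟩ := exists_hasDerivAt_eq_slope ψ (deriv ψ) hab hψ.continuousOn
      (fun x hx => (hψdiff x (Ioo_subset_Icc_self hx)).hasDerivAt)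
    have hcI : c ∈ Icc a b := Ioo_subset_Icc_self hc
    have hcpos : 0 < deriv ψ c := by
      rw [hc']
      exact div_pos (sub_pos.mpr (hmono haI hbI hab)) (sub_pos.mpr hab)
    intro x hx
    rcases lt_trichotomy (deriv ψ x) 0 with h | h | h
    · exfalso
      have hsub : uIcc x c ⊆ Icc a b := uIcc_subset_Icc hx hcI
      have hiv := intermediate_value_uIcc (hcψ'.mono hsub)
      have h0 : (0:ℝ) ∈ uIcc (deriv ψ x) (deriv ψ c) := by
        rw [Set.mem_uIcc]; left; exact ⟨h.le, hcpos.le⟩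
      obtain ⟨y, hy, hy0⟩ := hiv h0
      exact hψ' y (hsub hy) hy0
    · exact absurd h (hψ' x hx)
    · exact h
  -- minimum of deriv ψ
  obtain ⟨x0, hx0, hx0min⟩ := isCompact_Icc.exists_isMinOn (nonempty_Icc.mpr hab.le) hcψ'
  set m := deriv ψ x0 with hm
  have hmpos : 0 < m := hψ'pos x0 hx0
  have hmle : ∀ x ∈ Icc a b, m ≤ deriv ψ x := fun x hx => hx0min hx
  -- linear lower bound for ψ xs - ψ t
  have hψlow : ∀ t ∈ Ico a xs, m * (xs - t) ≤ ψ xs - ψ t := by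
    intro t ht
    have htxs : t < xs := ht.2
    obtain ⟨c, hc, hc'⟩ := exists_hasDerivAt_eq_slope ψ (deriv ψ) htxs
      (hψ.continuousOn.mono (Icc_subset_Icc ht.1 hxsI.2))
      (fun x hx => (hψdiff x ⟨(lt_of_le_of_lt ht.1 hx.1).le, (hx.2.trans hxb).le⟩).hasDerivAt)
    have hcI : c ∈ Icc a b := ⟨(lt_of_le_of_lt ht.1 hc.1).le, (hc.2.trans hxb).le⟩
    have h1 : m ≤ (ψ xs - ψ t) / (xs - t) := hc' ▸ hmle c hcI
    have h2 : (0:ℝ) < xs - t := by linarith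
    calc m * (xs - t) ≤ ((ψ xs - ψ t) / (xs - t)) * (xs - t) :=
          mul_le_mul_of_nonneg_right h1 h2.le
      _ = ψ xs - ψ t := div_mul_cancel₀ _ h2.ne'
  have hψpos' : ∀ t ∈ Ico a xs, 0 < ψ xs - ψ t := fun t ht =>
    lt_of_lt_of_le (by nlinarith [ht.2]) (hψlow t ht)
  -- bound for deriv f
  have hcf' : ContinuousOn (derivWithin f (Icc a b)) (Icc a b) :=
    hf.continuousOn_derivWithin hud le_rfl
  obtain ⟨M, hM⟩ := isCompact_Icc.exists_bound_of_continuousOn hcf'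
  have hM0 : 0 ≤ M := le_trans (norm_nonneg _) (hM a haI)
  have hfd : ∀ x ∈ Ioo a b, HasDerivAt f (deriv f x) x := fun x hx =>
    (((hf.contDiffAt (Icc_mem_nhds hx.1 hx.2)).differentiableAt one_ne_zero)).hasDerivAt
  have hfder_bound : ∀ x ∈ Ioo a b, |deriv f x| ≤ M := by
    intro x hx
    have h1 : derivWithin f (Icc a b) x = deriv f x :=
      derivWithin_of_mem_nhds (Icc_mem_nhds hx.1 hx.2)
    have h2 := hM x (Ioo_subset_Icc_self hx)
    rw [h1, Real.norm_eq_abs] at h2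
    exact h2
  -- Lipschitz-type bound for f near xs
  have hLip : ∀ y ∈ Ico a xs, f xs - f y ≤ M * (xs - y) := by
    intro y hy
    obtain ⟨c, hc, hc'⟩ := exists_hasDerivAt_eq_slope f (deriv f) hy.2
      (hf.continuousOn.mono (Icc_subset_Icc hy.1 hxsI.2))
      (fun x hx => hfd x ⟨lt_of_le_of_lt hy.1 hx.1, hx.2.trans hxb⟩)
    have hcI : c ∈ Ioo a b := ⟨lt_of_le_of_lt hy.1 hc.1, hc.2.trans hxb⟩
    have h2 : (f xs - f y) / (xs - y) ≤ M := hc' ▸ (abs_le.mp (hfder_bound c hcI)).2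
    have h3 : (0:ℝ) < xs - y := by linarith [hy.2]
    calc f xs - f y = ((f xs - f y) / (xs - y)) * (xs - y) := (div_mul_cancel₀ _ h3.ne').symm
      _ ≤ M * (xs - y) := mul_le_mul_of_nonneg_right h2 h3.le
  -- the integrand
  set g : ℝ → ℝ := fun t => (ψ xs - ψ t) ^ (-α) * deriv f t with hgdef
  have hIocsub : Ioc a xs ⊆ Icc a b := fun t ht => ⟨ht.1.le, ht.2.trans hxb.le⟩
  -- a.e. t < xs on restrict Ioc a xs
  have haelt : ∀ᵐ t ∂(volume.restrict (Ioc a xs)), t ∈ Ioo a xs := by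
    have h1 : ∀ᵐ t ∂(volume.restrict (Ioc a xs)), t ∈ Ioc a xs :=
      ae_restrict_mem measurableSet_Ioc
    have h2 : ∀ᵐ t ∂(volume.restrict (Ioc a xs)), t ≠ xs := by
      refine ae_iff.mpr ?_
      have : {t : ℝ | ¬ t ≠ xs} = {xs} := by ext t; simp
      rw [this]
      exact le_antisymm (le_trans (Measure.restrict_apply_le _ _) (by simp)) zero_le
    filter_upwards [h1, h2] with t ht hne
    exact ⟨ht.1, lt_of_le_of_ne ht.2 hne⟩
  -- measurability of g
  have haesm : AEStronglyMeasurable g (volume.restrict (Ioc a xs)) := by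
    have hψae : AEMeasurable ψ (volume.restrict (Ioc a xs)) :=
      (hψ.continuousOn.mono hIocsub).aemeasurable measurableSet_Ioc
    have h1 : AEMeasurable (fun t => Real.exp (Real.log (ψ xs - ψ t) * (-α)) * deriv f t)
        (volume.restrict (Ioc a xs)) := by
      have houter : Measurable (fun v : ℝ => Real.exp (Real.log v * (-α))) :=
        Real.measurable_exp.comp (Real.measurable_log.mul_const _)
      exact (houter.comp_aemeasurable (aemeasurable_const.sub hψae)).mul
        (measurable_deriv f).aemeasurable
    refine h1.aestronglyMeasurable.congr ?_
    filter_upwards [haelt] with t ht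
    have hpos : 0 < ψ xs - ψ t := hψpos' t ⟨ht.1.le, ht.2⟩
    simp only [hgdef]
    rw [Real.rpow_def_of_pos hpos]
  -- comparison function
  set K' : ℝ := m ^ (-α) * M with hK'def
  have hK'0 : 0 ≤ K' := mul_nonneg (rpow_nonneg hmpos.le _) hM0
  have hφint : IntervalIntegrable (fun t => K' * (xs - t) ^ (-α)) volume a xs := by
    have h0 : IntervalIntegrable (fun x : ℝ => x ^ (-α)) volume (xs - a) (xs - xs) :=
      intervalIntegral.intervalIntegrable_rpow' (by linarith)
    have h1 := h0.comp_sub_left xs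
    simp only [sub_sub_cancel] at h1
    exact h1.const_mul K'
  have hgint : IntervalIntegrable g volume a xs := by
    refine hφint.mono_fun ?_ ?_
    · rwa [uIoc_of_le hax.le]
    · rw [uIoc_of_le hax.le]
      filter_upwards [haelt] with t ht
      have hpos : 0 < ψ xs - ψ t := hψpos' t ⟨ht.1.le, ht.2⟩
      have htpos : 0 < xs - t := by linarith [ht.2]
      have hb1 : (ψ xs - ψ t) ^ (-α) ≤ (m * (xs - t)) ^ (-α) :=
        Real.rpow_le_rpow_of_nonpos (by positivity) (hψlow t ⟨ht.1.le, ht.2⟩)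
          (by linarith)
      have hb2 : (m * (xs - t)) ^ (-α) = m ^ (-α) * (xs - t) ^ (-α) :=
        Real.mul_rpow hmpos.le htpos.le
      have hb3 : |deriv f t| ≤ M := hfder_bound t ⟨ht.1, ht.2.trans hxb⟩
      simp only [hgdef, Real.norm_eq_abs]
      rw [abs_mul]
      have hwa : |(ψ xs - ψ t) ^ (-α)| = (ψ xs - ψ t) ^ (-α) :=
        abs_of_nonneg (rpow_nonneg hpos.le _)
      rw [hwa]
      calc (ψ xs - ψ t) ^ (-α) * |deriv f t|
          ≤ (m ^ (-α) * (xs - t) ^ (-α)) * M := by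
            rw [← hb2]
            exact mul_le_mul hb1 hb3 (abs_nonneg _) (rpow_nonneg (by positivity) _)
        _ ≤ |K' * (xs - t) ^ (-α)| := by
            rw [abs_of_nonneg (mul_nonneg hK'0 (rpow_nonneg htpos.le _)), hK'def]
            ring_nf
            exact le_refl _
  -- the primitive
  set F : ℝ → ℝ := fun y => ∫ t in a..y, g t with hFdef
  have hFcont : ContinuousOn F (Icc a xs) := by
    have hint : IntegrableOn g (uIcc a xs) volume := by
      rw [uIcc_of_le hax.le, integrableOn_Icc_iff_integrableOn_Ioc]
      exact (intervalIntegrable_iff_integrableOn_Ioc_of_le hax.le).mp hgint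
    have := intervalIntegral.continuousOn_primitive_interval hint
    rwa [uIcc_of_le hax.le] at this
  -- continuity of deriv f on the open interval
  have hcf'' : ContinuousOn (deriv f) (Ioo a b) :=
    (hf.mono Ioo_subset_Icc_self).continuousOn_deriv_of_isOpen isOpen_Ioo le_rfl
  -- main estimate
  have key : ∀ y ∈ Ioo a xs, -(K' * (xs - y) ^ (1 - α)) ≤ F y := by
    intro y hy
    have hyI : y ∈ Icc a b := ⟨hy.1.le, (hy.2.trans hxb).le⟩
    have hwy_pos : 0 < ψ xs - ψ y := hψpos' y ⟨hy.1.le, hy.2⟩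
    -- Step 1: integration by parts on [a', y]
    have step1 : ∀ a' ∈ Ioo a y,
        (ψ xs - ψ y) ^ (-α) * (f y - f xs) ≤ ∫ t in a'..y, g t := by
      intro a' ha'
      have ha'y : a' < y := ha'.2
      have hsubIcc : Icc a' y ⊆ Ioo a xs := fun t ht =>
        ⟨lt_of_lt_of_le ha'.1 ht.1, lt_of_le_of_lt ht.2 hy.2⟩
      have hsubIoo : Icc a' y ⊆ Ioo a b := fun t ht =>
        (Ioo_subset_Ioo le_rfl hxb.le) (hsubIcc ht)
      have huIcc : uIcc a' y = Icc a' y := uIcc_of_le ha'y.le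
      set w : ℝ → ℝ := fun t => (ψ xs - ψ t) ^ (-α) with hwdef
      set w' : ℝ → ℝ := fun t => -(deriv ψ t) * (-α) * (ψ xs - ψ t) ^ (-α - 1) with hw'def
      have hwderiv : ∀ x ∈ uIcc a' y, HasDerivAt w (w' x) x := by
        intro x hx
        rw [huIcc] at hx
        have hxIcc : x ∈ Icc a b := Ioo_subset_Icc_self (hsubIoo hx)
        have hpos : 0 < ψ xs - ψ x := hψpos' x ⟨hxIcc.1, (hsubIcc hx).2⟩
        have h1 : HasDerivAt (fun t => ψ xs - ψ t) (-(deriv ψ x)) x :=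
          (hψdiff x hxIcc).hasDerivAt.const_sub (ψ xs)
        exact h1.rpow_const (Or.inl hpos.ne')
      have hvderiv : ∀ x ∈ uIcc a' y, HasDerivAt (fun t => f t - f xs) (deriv f x) x := by
        intro x hx
        rw [huIcc] at hx
        exact (hfd x (hsubIoo hx)).sub_const (f xs)
      have hw'int : IntervalIntegrable w' volume a' y := by
        apply ContinuousOn.intervalIntegrable
        rw [huIcc]
        have hc1 : ContinuousOn (fun t => ψ xs - ψ t) (Icc a' y) :=
          continuousOn_const.sub (hψ.continuousOn.mono (fun t ht =>
            Ioo_subset_Icc_self (hsubIoo ht)))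
        have hc2 : ContinuousOn (fun t => (ψ xs - ψ t) ^ (-α - 1)) (Icc a' y) :=
          hc1.rpow_const (fun x hx => Or.inl
            (hψpos' x ⟨(Ioo_subset_Icc_self (hsubIoo hx)).1, (hsubIcc hx).2⟩).ne')
        exact (((hcψ'.mono (fun t ht => Ioo_subset_Icc_self (hsubIoo ht))).neg).mul
          continuousOn_const).mul hc2
      have hfint : IntervalIntegrable (deriv f) volume a' y := by
        apply ContinuousOn.intervalIntegrable
        rw [huIcc]
        exact hcf''.mono hsubIoo
      have hibp := intervalIntegral.integral_mul_deriv_eq_deriv_mul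
        hwderiv hvderiv hw'int hfint
      -- hibp : ∫ x in a'..y, w x * deriv f x
      --   = w y * (f y - f xs) - w a' * (f a' - f xs) - ∫ x in a'..y, w' x * (f x - f xs)
      have hterm1 : w a' * (f a' - f xs) ≤ 0 := by
        have h1 : 0 ≤ w a' := rpow_nonneg (hψpos' a' ⟨ha'.1.le, ha'y.trans hy.2⟩).le _
        have h2 : f a' - f xs ≤ 0 :=
          sub_nonpos.mpr (hmax a' ⟨ha'.1.le, ((ha'y.trans hy.2).trans hxb).le⟩)
        exact mul_nonpos_of_nonneg_of_nonpos h1 h2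
      have hterm2 : ∫ x in a'..y, w' x * (f x - f xs) ≤ 0 := by
        have h6 : 0 ≤ ∫ x in a'..y, w' x * (f xs - f x) := by
          apply intervalIntegral.integral_nonneg ha'y.le
          intro u hu
          have huIoo : u ∈ Ioo a b := hsubIoo hu
          have huIcc : u ∈ Icc a b := Ioo_subset_Icc_self huIoo
          have hw'nn : 0 ≤ w' u := by
            have := hψ'pos u huIcc
            have hrp : (0:ℝ) ≤ (ψ xs - ψ u) ^ (-α - 1) :=
              rpow_nonneg (hψpos' u ⟨huIcc.1, (hsubIcc hu).2⟩).le _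
            simp only [hw'def]
            have h9 : -deriv ψ u * -α * (ψ xs - ψ u) ^ (-α - 1)
                = (deriv ψ u * α) * (ψ xs - ψ u) ^ (-α - 1) := by ring
            rw [h9]
            exact mul_nonneg (mul_nonneg this.le hα0.le) hrp
          exact mul_nonneg hw'nn (sub_nonneg.mpr (hmax u huIcc))
        have h7 : ∫ x in a'..y, w' x * (f x - f xs)
            = -∫ x in a'..y, w' x * (f xs - f x) := by
          rw [← intervalIntegral.integral_neg]
          apply intervalIntegral.integral_congr
          intro x _
          ring
        rw [h7]
        linarith
      have hgw : ∫ t in a'..y, g t = ∫ x in a'..y, w x * deriv f x := rfl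
      rw [hgw, hibp]
      have hwy : w y * (f y - f xs) = (ψ xs - ψ y) ^ (-α) * (f y - f xs) := rfl
      linarith [hterm1, hterm2, hwy.ge, hwy.le]
    -- Step 2: limit a' → a⁺
    have step2 : (ψ xs - ψ y) ^ (-α) * (f y - f xs) ≤ F y := by
      have hsplit : ∀ a' ∈ Ioo a y, ∫ t in a'..y, g t = F y - F a' := by
        intro a' ha'
        have h1 : IntervalIntegrable g volume a a' := hgint.mono_set
          (uIcc_subset_uIcc left_mem_uIcc (by
            rw [uIcc_of_le hax.le]; exact ⟨ha'.1.le, (ha'.2.trans hy.2).le⟩))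
        have h2 : IntervalIntegrable g volume a' y := hgint.mono_set
          (by
            rw [uIcc_of_le ha'.2.le, uIcc_of_le hax.le]
            exact Icc_subset_Icc ha'.1.le hy.2.le)
        have := intervalIntegral.integral_add_adjacent_intervals h1 h2
        simp only [hFdef]
        linarith [this]
      haveI : (nhdsWithin a (Ioo a y)).NeBot := by
        rw [← mem_closure_iff_nhdsWithin_neBot, closure_Ioo hy.1.ne]
        exact ⟨le_rfl, hy.1.le⟩
      have htends : Tendsto (fun a' => F y - F a') (nhdsWithin a (Ioo a y)) (nhds (F y)) := by
        have hFa : F a = 0 := intervalIntegral.integral_same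
        have h1 : Tendsto F (nhdsWithin a (Ioo a y)) (nhds (F a)) :=
          (hFcont.continuousWithinAt ⟨le_rfl, hax.le⟩).mono_left
            (nhdsWithin_mono a (fun t ht => ⟨ht.1.le, (ht.2.trans hy.2).le⟩))
        have h2 : Tendsto (fun a' => F y - F a') (nhdsWithin a (Ioo a y))
            (nhds (F y - F a)) := tendsto_const_nhds.sub h1
        rwa [hFa, sub_zero] at h2
      refine ge_of_tendsto htends ?_
      filter_upwards [self_mem_nhdsWithin] with a' ha'
      rw [← hsplit a' ha']
      exact step1 a' ha'
    -- Step 3: bound the boundary term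
    have hxy : (0:ℝ) < xs - y := by linarith [hy.2]
    have hb1 : (ψ xs - ψ y) ^ (-α) ≤ m ^ (-α) * (xs - y) ^ (-α) := by
      rw [← Real.mul_rpow hmpos.le hxy.le]
      exact Real.rpow_le_rpow_of_nonpos (by positivity) (hψlow y ⟨hy.1.le, hy.2⟩)
        (by linarith)
    have hb2 : f xs - f y ≤ M * (xs - y) := hLip y ⟨hy.1.le, hy.2⟩
    have hb3 : 0 ≤ f xs - f y := sub_nonneg.mpr (hmax y hyI)
    have hb4 : (ψ xs - ψ y) ^ (-α) * (f xs - f y)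
        ≤ (m ^ (-α) * (xs - y) ^ (-α)) * (M * (xs - y)) :=
      mul_le_mul hb1 hb2 hb3 (by positivity)
    have hb5 : (m ^ (-α) * (xs - y) ^ (-α)) * (M * (xs - y)) = K' * (xs - y) ^ (1 - α) := by
      have he : (xs - y) ^ (1 - α) = (xs - y) ^ (-α) * (xs - y) := by
        rw [show (1 - α) = -α + 1 by ring, Real.rpow_add hxy, Real.rpow_one]
      rw [hK'def, he]; ring
    have : (ψ xs - ψ y) ^ (-α) * (f xs - f y) ≤ K' * (xs - y) ^ (1 - α) := by
      rw [← hb5]; exact hb4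
    nlinarith [step2]
  -- limit y → xs⁻
  have hFxs : 0 ≤ F xs := by
    haveI : (nhdsWithin xs (Ioo a xs)).NeBot := by
      rw [← mem_closure_iff_nhdsWithin_neBot, closure_Ioo hax.ne]
      exact ⟨hax.le, le_rfl⟩
    have h1 : Tendsto F (nhdsWithin xs (Ioo a xs)) (nhds (F xs)) :=
      (hFcont.continuousWithinAt ⟨hax.le, le_rfl⟩).mono_left
        (nhdsWithin_mono xs (fun t ht => ⟨ht.1.le, ht.2.le⟩))
    have h2 : Tendsto (fun y => -(K' * (xs - y) ^ (1 - α)))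
        (nhdsWithin xs (Ioo a xs)) (nhds 0) := by
      have hs : Tendsto (fun y : ℝ => xs - y) (nhdsWithin xs (Ioo a xs)) (nhds 0) := by
        have h : Tendsto (fun y : ℝ => xs - y) (nhds xs) (nhds (xs - xs)) :=
          tendsto_const_nhds.sub tendsto_id
        rw [sub_self] at h
        exact h.mono_left nhdsWithin_le_nhds
      have hrp : Tendsto (fun y : ℝ => (xs - y) ^ (1 - α))
          (nhdsWithin xs (Ioo a xs)) (nhds 0) := by
        have hcont : ContinuousAt (fun u : ℝ => u ^ (1 - α)) 0 :=
          Real.continuousAt_rpow_const 0 (1 - α) (Or.inr (by linarith))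
        have := hcont.tendsto.comp hs
        rwa [Real.zero_rpow (by linarith : (1:ℝ) - α ≠ 0)] at this
      have := (hrp.const_mul K').neg
      simpa using this
    exact le_of_tendsto_of_tendsto h2 h1
      (by filter_upwards [self_mem_nhdsWithin] with y hy; exact key y hy)
  -- conclude
  unfold caputo
  have hΓ : 0 < Real.Gamma (1 - α) := Real.Gamma_pos_of_pos (by linarith)
  have : (∫ t in a..xs, (ψ xs - ψ t) ^ (-α) * deriv f t) = F xs := rfl
  rw [this]
  positivity
end
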